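/- For every d, ξ > 0 there exist ρ, c > 0 and n₀ such that the following holds for every (ρ, d, ee)-dense 3-uniform hypergraph H=(V,E) on n ≥ n₀ vertices. For all sets P, P' ⊆ V×V of ordered pairs, each of size at least ξ·n², the number of 5-tuples of distinct vertices (p₁,p₂,x,p₁',p₂') with (p₁,p₂) ∈ P and (p₁',p₂') ∈ P' such that p₁p₂xp₁'p₂' is a tight path (i.e., p₁p₂x, p₂xp₁', and xp₁'p₂' are edges of H) is at least c·n⁵. -/

import Mathlib

open Finset

/- `E` is the edge set of a 3-uniform hypergraph: every edge is a 3-element vertex set. -/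
def ThreeUniform {V : Type*} (E : Finset (Finset V)) : Prop :=
  ∀ e ∈ E, e.card = 3

variable {n : ℕ}

/- Number of pairs `(x,(y,z)) ∈ X × P` with `{x,y,z} ∈ E`. -/
open Classical in
noncomputable def eXP (E : Finset (Finset (Fin n))) (X : Finset (Fin n))
    (P : Finset (Fin n × Fin n)) : ℕ :=
  ((X ×ˢ P).filter (fun q => ({q.1, q.2.1, q.2.2} : Finset (Fin n)) ∈ E)).card

/- `H = (Fin n, E)` is `(ρ, d, ev)`-dense. -/
def EvDense (E : Finset (Finset (Fin n))) (ρ d : ℝ) : Prop :=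
  ∀ (X : Finset (Fin n)) (P : Finset (Fin n × Fin n)),
    d * X.card * P.card - ρ * (n : ℝ) ^ 3 ≤ (eXP E X P : ℝ)

/- `H = (Fin n, E)` is `(ρ, d, ev)`-dense over `(X, P)`. -/
def EvDenseOver (E : Finset (Finset (Fin n))) (ρ d : ℝ) (X : Finset (Fin n))
    (P : Finset (Fin n × Fin n)) : Prop :=
  ∀ X' ⊆ X, ∀ P' ⊆ P,
    d * X'.card * P'.card - ρ * X.card * P.card ≤ (eXP E X' P' : ℝ)

/- The set `K(P,Q)` of pairs of ordered pairs overlapping in the middle coordinate. -/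
open Classical in
noncomputable def Kmid (P Q : Finset (Fin n × Fin n)) :
    Finset ((Fin n × Fin n) × Fin n × Fin n) :=
  (P ×ˢ Q).filter (fun pq => pq.1.2 = pq.2.1)

/- Number of pairs `((x,y),(y,z)) ∈ P × Q` with `{x,y,z} ∈ E`. -/
open Classical in
noncomputable def ePQ (E : Finset (Finset (Fin n))) (P Q : Finset (Fin n × Fin n)) : ℕ :=
  ((P ×ˢ Q).filter (fun pq =>
    pq.1.2 = pq.2.1 ∧ ({pq.1.1, pq.1.2, pq.2.2} : Finset (Fin n)) ∈ E)).card

/- `H = (Fin n, E)` is `(ρ, d, ee)`-dense. -/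
def EeDense (E : Finset (Finset (Fin n))) (ρ d : ℝ) : Prop :=
  ∀ P Q : Finset (Fin n × Fin n),
    d * ((Kmid P Q).card : ℝ) - ρ * (n : ℝ) ^ 3 ≤ (ePQ E P Q : ℝ)

/- Number of triples `(x,y,z) ∈ X × Y × Z` with `{x,y,z} ∈ E`. -/
open Classical in
noncomputable def eXYZ (E : Finset (Finset (Fin n))) (X Y Z : Finset (Fin n)) : ℕ :=
  ((X ×ˢ Y ×ˢ Z).filter (fun t => ({t.1, t.2.1, t.2.2} : Finset (Fin n)) ∈ E)).card

/- `H = (Fin n, E)` is `(ρ, d, vvv)`-dense. -/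
def VvvDense (E : Finset (Finset (Fin n))) (ρ d : ℝ) : Prop :=
  ∀ X Y Z : Finset (Fin n),
    d * X.card * Y.card * Z.card - ρ * (n : ℝ) ^ 3 ≤ (eXYZ E X Y Z : ℝ)

/- The (vertex) degree of `v`: the number of edges containing `v`, i.e. the number of
pairs `{y,z}` with `{v,y,z} ∈ E`. -/
noncomputable def hdeg (E : Finset (Finset (Fin n))) (v : Fin n) : ℕ :=
  (E.filter (fun e => v ∈ e)).card

/- The codegree of `u` and `v`: the number of vertices `w` with `{u,v,w} ∈ E`. -/
open Classical in
noncomputable def codeg (E : Finset (Finset (Fin n))) (u v : Fin n) : ℕ :=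
  (univ.filter (fun w => ({u, v, w} : Finset (Fin n)) ∈ E)).card

/- A tight Hamilton cycle: a cyclic ordering of all vertices in which every three
cyclically consecutive vertices form an edge. -/
def HasTightHamiltonCycle (E : Finset (Finset (Fin n))) : Prop :=
  ∃ f : ZMod n → Fin n, Function.Bijective f ∧
    ∀ i : ZMod n, ({f i, f (i + 1), f (i + 2)} : Finset (Fin n)) ∈ E

/- The list `l` of vertices is a tight path: its entries are distinct and every three
consecutive entries form an edge. -/
def TightPath (E : Finset (Finset (Fin n))) (l : List (Fin n)) : Prop :=
  l.Nodup ∧ ∀ (i : ℕ) (h : i + 2 < l.length),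
    ({l[i]'(by omega), l[i+1]'(by omega), l[i+2]'h} : Finset (Fin n)) ∈ E

/- The set `Z_{xy}` of vertices `z` with `xyz ∈ E` and `d(y,z) ≥ β n`. -/
open Classical in
noncomputable def connSet (E : Finset (Finset (Fin n))) (β : ℝ) (x y : Fin n) :
    Finset (Fin n) :=
  univ.filter (fun z => ({x, y, z} : Finset (Fin n)) ∈ E ∧ β * n ≤ (codeg E y z : ℝ))

/- The ordered pair `(x,y)` is `β`-connectable. -/
def Connectable (E : Finset (Finset (Fin n))) (β : ℝ) (x y : Fin n) : Prop :=
  β * n ≤ ((connSet E β x y).card : ℝ)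

/- A tight `(a,b)`-`(c,d)`-path is `β`-connectable if `(b,a)` and `(c,d)` are
`β`-connectable. -/
def ConnectablePath (E : Finset (Finset (Fin n))) (β : ℝ) (l : List (Fin n)) : Prop :=
  ∃ h : 2 ≤ l.length,
    Connectable E β (l[1]'(by omega)) (l[0]'(by omega)) ∧
    Connectable E β (l[l.length - 2]'(by omega)) (l[l.length - 1]'(by omega))

/- The number of tight `(x,y)`-`(z,w)`-paths with `ℓ` inner vertices. -/
open Classical in
noncomputable def connCount (E : Finset (Finset (Fin n))) (x y z w : Fin n) (ℓ : ℕ) : ℕ :=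
  (univ.filter (fun t : Fin ℓ → Fin n =>
    TightPath E ([x, y] ++ List.ofFn t ++ [z, w]))).card
-- extra defs
/- A bipartite graph between `V₁` and `V₂` (inside an ambient graph `G`) is `(η,d)`-regular. -/
open Classical in
def RegularPair (G : SimpleGraph (Fin n)) (V₁ V₂ : Finset (Fin n)) (η d : ℝ) : Prop :=
  ∀ X ⊆ V₁, ∀ Y ⊆ V₂,
    |(((X ×ˢ Y).filter (fun p => G.Adj p.1 p.2)).card : ℝ) - d * X.card * Y.card|
      ≤ η * V₁.card * V₂.card

/- A graph is `(ρ,d)`-dense. -/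
open Classical in
def GraphDense (G : SimpleGraph (Fin n)) (ρ d : ℝ) : Prop :=
  ∀ X Y : Finset (Fin n),
    d * X.card * Y.card - ρ * (n : ℝ) ^ 2 ≤
      (((X ×ˢ Y).filter (fun p => G.Adj p.1 p.2)).card : ℝ)

/- The bipartite graph with (ordered) edge set `P ⊆ V₁ × V₂` is `(η,ξ)`-regular. -/
open Classical in
def RegBip {N : ℕ} (P : Finset (Fin N × Fin N)) (V₁ V₂ : Finset (Fin N)) (η ξ : ℝ) : Prop :=
  ∀ X ⊆ V₁, ∀ Y ⊆ V₂,
    |((P.filter (fun p => p.1 ∈ X ∧ p.2 ∈ Y)).card : ℝ) - ξ * X.card * Y.card|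
      ≤ η * V₁.card * V₂.card

/- The shadow `∂H[A,B]`: ordered pairs `(a,b) ∈ A × B` contained in a common edge. -/
open Classical in
noncomputable def shadowPairs (E : Finset (Finset (Fin n))) (A B : Finset (Fin n)) :
    Finset (Fin n × Fin n) :=
  (A ×ˢ B).filter (fun p => ∃ e ∈ E, p.1 ∈ e ∧ p.2 ∈ e)

/- The restricted neighbourhood `N(v,P)`. -/
open Classical in
noncomputable def Nres (E : Finset (Finset (Fin n))) (v : Fin n)
    (P : Finset (Fin n × Fin n)) : Finset (Fin n × Fin n) :=
  P.filter (fun p => ({v, p.1, p.2} : Finset (Fin n)) ∈ E)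

/- The number of `(P,Q)`-cherries, counted as ordered tuples `(x,y,z,w)` with
`{x,y} ∈ P`, `{z,w} ∈ Q` disjoint and `xyz, yzw ∈ E`. -/
open Classical in
noncomputable def cherryCount (E : Finset (Finset (Fin n)))
    (P Q : Finset (Finset (Fin n))) : ℕ :=
  (univ.filter (fun t : Fin n × Fin n × Fin n × Fin n =>
    ({t.1, t.2.1} : Finset (Fin n)) ∈ P ∧
    ({t.2.2.1, t.2.2.2} : Finset (Fin n)) ∈ Q ∧
    Disjoint ({t.1, t.2.1} : Finset (Fin n)) ({t.2.2.1, t.2.2.2} : Finset (Fin n)) ∧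
    ({t.1, t.2.1, t.2.2.1} : Finset (Fin n)) ∈ E ∧
    ({t.2.1, t.2.2.1, t.2.2.2} : Finset (Fin n)) ∈ E)).card

/- The number of tight paths on `ℓ+2` vertices starting with an ordered pair from `P`
and whose last two vertices form a pair from `Q`. -/
open Classical in
noncomputable def pathCountPQ (E : Finset (Finset (Fin n))) (P : Finset (Fin n × Fin n))
    (Q : Finset (Finset (Fin n))) (ℓ : ℕ) : ℕ :=
  (univ.filter (fun t : Fin (ℓ + 2) → Fin n =>
    TightPath E (List.ofFn t) ∧ (t 0, t 1) ∈ P ∧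
    ({t ⟨ℓ, by omega⟩, t ⟨ℓ + 1, by omega⟩} : Finset (Fin n)) ∈ Q)).card

/- Two disjoint unordered pairs `q`, `q'` are `(θ,L)`-turnable. -/
def Turnable (E : Finset (Finset (Fin n))) (θ : ℝ) (L : ℕ) (q q' : Finset (Fin n)) : Prop :=
  Disjoint q q' ∧ ∀ q₁ q₂ q₁' q₂' : Fin n, q = {q₁, q₂} → q' = {q₁', q₂'} →
    ∃ ℓ : ℕ, 1 ≤ ℓ ∧ ℓ ≤ L ∧ θ * (n : ℝ) ^ ℓ ≤ (connCount E q₁ q₂ q₁' q₂' ℓ : ℝ)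

/- `t` is an absorber for the triple `(v₁,v₂,v₃)`; here
`(x₁,x₂,x₃,y₁,y₂,y₃,z₁,z₂,z₃) = (t 0,…,t 8)` and `Pᵢ = (aᵢ,bᵢ,cᵢ,dᵢ)` are
`(t 9,…,t 12)`, `(t 13,…,t 16)`, `(t 17,…,t 20)`. -/
def IsAbsorber (E : Finset (Finset (Fin n))) (v₁ v₂ v₃ : Fin n) (t : Fin 21 → Fin n) : Prop :=
  Function.Injective t ∧ (∀ i : Fin 21, t i ≠ v₁ ∧ t i ≠ v₂ ∧ t i ≠ v₃) ∧
  TightPath E [t 0, t 1, t 2, t 3, t 4, t 5, t 6, t 7, t 8] ∧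
  TightPath E [t 0, t 1, t 2, t 6, t 7, t 8] ∧
  TightPath E [t 9, t 10, v₁, t 11, t 12] ∧ TightPath E [t 9, t 10, t 3, t 11, t 12] ∧
  TightPath E [t 13, t 14, v₂, t 15, t 16] ∧ TightPath E [t 13, t 14, t 4, t 15, t 16] ∧
  TightPath E [t 17, t 18, v₃, t 19, t 20] ∧ TightPath E [t 17, t 18, t 5, t 19, t 20]

open Classical in
noncomputable def absorberCount (E : Finset (Finset (Fin n))) (v₁ v₂ v₃ : Fin n) : ℕ :=
  (univ.filter (fun t : Fin 21 → Fin n => IsAbsorber E v₁ v₂ v₃ t)).card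

/- `ψ` is a copy of `C₈(4)`, the 4-blow-up of the tight cycle on 8 vertices. -/
def IsC84Copy (E : Finset (Finset (Fin n))) (ψ : Fin 8 × Fin 4 → Fin n) : Prop :=
  Function.Injective ψ ∧ ∀ (i : Fin 8) (a b c : Fin 4),
    ({ψ (i, a), ψ (i + 1, b), ψ (i + 2, c)} : Finset (Fin n)) ∈ E

open Classical in
noncomputable def c84Count (E : Finset (Finset (Fin n))) : ℕ :=
  (univ.filter (fun ψ : Fin 8 × Fin 4 → Fin n => IsC84Copy E ψ)).card

/- Number of copies of `F` in `H`: injective maps sending edges to edges. -/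
open Classical in
noncomputable def copyCount {k m : ℕ} (F : Finset (Finset (Fin k)))
    (H : Finset (Finset (Fin m))) : ℕ :=
  (univ.filter (fun ψ : Fin k → Fin m =>
    Function.Injective ψ ∧ ∀ e ∈ F, e.image ψ ∈ H)).card

/- Number of copies of `K₄⁽³⁾⁻`, counted as ordered 4-tuples `(a,x,y,z)` of distinct
vertices with apex `a`. -/
open Classical in
noncomputable def k4mCount (E : Finset (Finset (Fin n))) : ℕ :=
  (univ.filter (fun t : Fin n × Fin n × Fin n × Fin n =>
    ([t.1, t.2.1, t.2.2.1, t.2.2.2] : List (Fin n)).Nodup ∧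
    ({t.1, t.2.1, t.2.2.1} : Finset (Fin n)) ∈ E ∧
    ({t.1, t.2.1, t.2.2.2} : Finset (Fin n)) ∈ E ∧
    ({t.1, t.2.2.1, t.2.2.2} : Finset (Fin n)) ∈ E)).card

/- Number of 5-tuples of distinct vertices `(p₁,p₂,x,p₁',p₂')` with `(p₁,p₂) ∈ P`,
`(p₁',p₂') ∈ P'` and `p₁p₂x`, `p₂xp₁'`, `xp₁'p₂'` edges. -/
open Classical in
noncomputable def midConnCount (E : Finset (Finset (Fin n)))
    (P P' : Finset (Fin n × Fin n)) : ℕ :=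
  (univ.filter (fun t : Fin n × Fin n × Fin n × Fin n × Fin n =>
    ([t.1, t.2.1, t.2.2.1, t.2.2.2.1, t.2.2.2.2] : List (Fin n)).Nodup ∧
    (t.1, t.2.1) ∈ P ∧ (t.2.2.2.1, t.2.2.2.2) ∈ P' ∧
    ({t.1, t.2.1, t.2.2.1} : Finset (Fin n)) ∈ E ∧
    ({t.2.1, t.2.2.1, t.2.2.2.1} : Finset (Fin n)) ∈ E ∧
    ({t.2.2.1, t.2.2.2.1, t.2.2.2.2} : Finset (Fin n)) ∈ E)).card

/-!
Put `ε = dξ/2` and call a pair `(b, x)` good for `P` if at least `εn` vertices `a` have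
`(a, b) ∈ P` and `abx ∈ E`. Ee-density applied to `P` and `V × X` shows that all but `n/4`
vertices `x` end at least `εn/2` good pairs; the same holds for `P'` read backwards, so at least
`n/2` vertices `x` are the middle of `(εn/2)²` pairs `((b, x), (x, c))` with `(b, x)` good for
`P` and `(c, x)` good for reversed `P'`. Ee-density applied to these two sets of good pairs yields
`Ω(n³)` edges `bxc`, each of which extends in at least `(εn)²` ways to a walk `abxce` with
`(a, b) ∈ P` and `(c, e) ∈ P'`. At most `3n⁴` of these `Ω(n⁵)` walks repeat a vertex.
-/

lemma Finset.sum_le_card_filter_le_mul_add {ι R : Type*} [Semiring R] [LinearOrder R]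
    [IsOrderedRing R] (s : Finset ι) (f : ι → R) {M t : R} (hM : ∀ i ∈ s, f i ≤ M)
    (ht : 0 ≤ t) :
    ∑ i ∈ s, f i ≤ #{i ∈ s | t ≤ f i} * M + #s * t := by
  rw [← sum_filter_add_sum_filter_not s fun i => t ≤ f i, ← nsmul_eq_mul, ← nsmul_eq_mul]
  refine add_le_add (sum_le_card_nsmul _ f M fun i hi => hM i (mem_filter.1 hi).1) ?_
  calc ∑ i ∈ s with ¬t ≤ f i, f i
      ≤ #{i ∈ s | ¬t ≤ f i} • t := sum_le_card_nsmul _ f t fun i hi =>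
        (not_le.1 (mem_filter.1 hi).2).le
    _ ≤ #s • t := nsmul_le_nsmul_left ht (card_filter_le _ _)

lemma Finset.triple_rev {α : Type*} [DecidableEq α] (a b c : α) :
    ({a, b, c} : Finset α) = {c, b, a} := by
  ext; simp only [mem_insert, mem_singleton]; tauto

def swapPairs {α β : Type*} (s : Finset (α × β)) : Finset (β × α) :=
  s.map (Equiv.prodComm α β).toEmbedding

@[simp] lemma mem_swapPairs {α β : Type*} {s : Finset (α × β)} {q : β × α} :
    q ∈ swapPairs s ↔ q.swap ∈ s := by
  simp [swapPairs]

@[simp] lemma card_swapPairs {α β : Type*} (s : Finset (α × β)) : #(swapPairs s) = #s :=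
  card_map _

lemma ThreeUniform.ne_of_mem {α : Type*} [DecidableEq α] {E : Finset (Finset α)}
    (hE : ThreeUniform E) {a b c : α} (h : {a, b, c} ∈ E) : a ≠ b ∧ a ≠ c ∧ b ≠ c := by
  have h3 := hE _ h
  refine ⟨?_, ?_, ?_⟩ <;> rintro rfl
  · have := card_le_two (a := a) (b := c); simp_all
  · have := card_le_two (a := b) (b := a); simp_all
  · have := card_le_two (a := a) (b := b); simp_all

section
variable (E : Finset (Finset (Fin n))) (P Q : Finset (Fin n × Fin n))

lemma card_Kmid_univ_prod (X : Finset (Fin n)) : #(Kmid P (univ ×ˢ X)) = #P * #X := by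
  rw [← card_product]
  refine card_nbij' (fun pq => (pq.1, pq.2.2)) (fun px => (px.1, (px.1.2, px.2))) ?_ ?_ ?_ ?_ <;>
    simp +contextual [Set.MapsTo, Set.LeftInvOn, Set.RightInvOn, Kmid]

noncomputable def backExt (b x : Fin n) : Finset (Fin n) :=
  {a | (a, b) ∈ P ∧ ({a, b, x} : Finset (Fin n)) ∈ E}

lemma ePQ_univ_prod (X : Finset (Fin n)) :
    ePQ E P (univ ×ˢ X) = ∑ x ∈ X, ∑ b, #(backExt E P b x) := by
  have hsum : ∑ x ∈ X, ∑ b, #(backExt E P b x) = #{t ∈ X ×ˢ univ ×ˢ univ |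
      (t.2.2, t.2.1) ∈ P ∧ ({t.2.2, t.2.1, t.1} : Finset (Fin n)) ∈ E} := by
    simp only [card_filter, sum_product, backExt]
  rw [hsum, ePQ]
  refine card_nbij' (fun pq => (pq.2.2, pq.1.2, pq.1.1)) (fun t => ((t.2.2, t.2.1), (t.2.1, t.1)))
    ?_ ?_ ?_ ?_ <;> aesop (add simp [Set.MapsTo, Set.LeftInvOn, Set.RightInvOn])

lemma card_backExt_le (b x : Fin n) : #(backExt E P b x) ≤ n :=
  (card_le_univ _).trans_eq (Fintype.card_fin n)

noncomputable def goodPairs (t : ℝ) : Finset (Fin n × Fin n) :=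
  {q | t ≤ #(backExt E P q.1 q.2)}

@[simp] lemma mem_goodPairs {t : ℝ} {q : Fin n × Fin n} :
    q ∈ goodPairs E P t ↔ t ≤ #(backExt E P q.1 q.2) := by
  simp [goodPairs]

noncomputable def goodEnds (t : ℝ) : Finset (Fin n) :=
  {x | t / 2 ≤ #{b | (b, x) ∈ goodPairs E P t}}

lemma sum_card_backExt_le {t : ℝ} (ht : 0 ≤ t) (x : Fin n) :
    ∑ b, (#(backExt E P b x) : ℝ) ≤ #{b | (b, x) ∈ goodPairs E P t} * n + n * t := by
  simpa [goodPairs] using sum_le_card_filter_le_mul_add univ (fun b => (#(backExt E P b x) : ℝ))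
    (fun b _ => mod_cast card_backExt_le E P b x) ht

lemma le_sum_card_goodPairs {ρ d ε : ℝ} (hdense : EeDense E ρ d) (hε : 0 ≤ ε)
    (hP : 2 * ε * n ^ 2 ≤ d * #P) (X : Finset (Fin n)) :
    ε * n ^ 2 * #X - ρ * n ^ 3 ≤ n * ∑ x ∈ X, (#{b | (b, x) ∈ goodPairs E P (ε * n)} : ℝ) := by
  have hdensity := hdense P (univ ×ˢ X)
  rw [card_Kmid_univ_prod, ePQ_univ_prod] at hdensity
  push_cast at hdensity
  have hsum := sum_le_sum fun x (_ : x ∈ X) =>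
    sum_card_backExt_le E P (t := ε * n) (by positivity) x
  rw [sum_add_distrib, ← sum_mul, sum_const, nsmul_eq_mul] at hsum
  have hX := mul_le_mul_of_nonneg_right hP (Nat.cast_nonneg #X)
  nlinarith

lemma card_compl_goodEnds_le {ρ d ε : ℝ} (hdense : EeDense E ρ d) (hε : 0 < ε)
    (hρ : ρ ≤ ε / 8) (hP : 2 * ε * n ^ 2 ≤ d * #P) :
    (#(goodEnds E P (ε * n))ᶜ : ℝ) ≤ n / 4 := by
  set Y := (goodEnds E P (ε * n))ᶜ
  have hY := le_sum_card_goodPairs E P hdense hε.le hP Y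
  have hsmall : ∑ x ∈ Y, (#{b | (b, x) ∈ goodPairs E P (ε * n)} : ℝ) ≤ #Y * (ε * n / 2) := by
    rw [← nsmul_eq_mul]
    exact sum_le_card_nsmul Y _ _ fun x hx => (not_le.1 (by simpa [Y, goodEnds] using hx)).le
  rcases n.eq_zero_or_pos with rfl | hn
  · simp [Finset.eq_empty_of_isEmpty Y]
  have hn : (0 : ℝ) < n := Nat.cast_pos.2 hn
  have hρn := mul_le_mul_of_nonneg_right hρ (by positivity : (0 : ℝ) ≤ n ^ 3)
  have hsmall' := mul_le_mul_of_nonneg_left hsmall hn.le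
  have hY' : ε * n ^ 2 / 2 * #Y ≤ ε * n ^ 2 / 2 * (n / 4) := by linarith
  exact le_of_mul_le_mul_left hY' (by positivity)

lemma card_Kmid_swapPairs (B C : Finset (Fin n × Fin n)) :
    #(Kmid B (swapPairs C)) = ∑ x, #{b | (b, x) ∈ B} * #{c | (c, x) ∈ C} := by
  simp only [← card_product]
  rw [← card_sigma]
  refine card_nbij' (fun pq => ⟨pq.1.2, (pq.1.1, pq.2.2)⟩) (fun s => ((s.2.1, s.1), (s.1, s.2.2)))
    ?_ ?_ ?_ ?_ <;> aesop (add simp [Set.MapsTo, Set.LeftInvOn, Set.RightInvOn, Kmid])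

noncomputable def tightWalks : Finset (Fin n × Fin n × Fin n × Fin n × Fin n) :=
  {t | (t.1, t.2.1) ∈ P ∧ (t.2.2.2.1, t.2.2.2.2) ∈ Q ∧
    ({t.1, t.2.1, t.2.2.1} : Finset (Fin n)) ∈ E ∧
    ({t.2.1, t.2.2.1, t.2.2.2.1} : Finset (Fin n)) ∈ E ∧
    ({t.2.2.1, t.2.2.2.1, t.2.2.2.2} : Finset (Fin n)) ∈ E}

lemma card_tightWalks_le (hE : ThreeUniform E) :
    #(tightWalks E P Q) ≤ midConnCount E P Q + 3 * n ^ 4 := by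
  let degenerate : Finset (Fin n × Fin n × Fin n × Fin n × Fin n) :=
    (univ.image fun (a, b, x, e) => (a, b, x, a, e)) ∪
      (univ.image fun (a, b, x, c) => (a, b, x, c, a)) ∪
      (univ.image fun (a, b, x, c) => (a, b, x, c, b))
  have hdegenerate : #degenerate ≤ 3 * n ^ 4 := by
    grw [card_union_le, card_union_le, card_image_le, card_image_le, card_image_le]
    simp only [card_univ, Fintype.card_prod, Fintype.card_fin]
    exact le_of_eq (by ring)
  unfold midConnCount
  refine (card_le_card (t := _ ∪ degenerate) ?_).trans
    ((card_union_le _ _).trans (Nat.add_le_add_left hdegenerate _))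
  rintro ⟨a, b, x, c, e⟩ ht
  simp only [tightWalks, mem_filter, mem_univ, true_and] at ht
  obtain ⟨hP, hQ, h₁, h₂, h₃⟩ := ht
  obtain ⟨hab, hax, hbx⟩ := hE.ne_of_mem h₁
  obtain ⟨-, hbc, hxc⟩ := hE.ne_of_mem h₂
  obtain ⟨-, hxe, hce⟩ := hE.ne_of_mem h₃
  -- the three edges separate all positions except `a, c`, `a, e` and `b, e`
  by_cases hac : a = c
  · subst hac; simp [degenerate]
  by_cases hae : a = e
  · subst hae; simp [degenerate]
  by_cases hbe : b = e
  · subst hbe; simp [degenerate]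
  simp [*]

lemma sum_card_backExt_mul_le_card_tightWalks (T : Finset ((Fin n × Fin n) × Fin n × Fin n))
    (hT : ∀ pq ∈ T, pq.1.2 = pq.2.1 ∧ ({pq.1.1, pq.1.2, pq.2.2} : Finset (Fin n)) ∈ E) :
    ∑ pq ∈ T, #(backExt E P pq.1.1 pq.1.2) * #(backExt E (swapPairs Q) pq.2.2 pq.2.1)
      ≤ #(tightWalks E P Q) := by
  simp only [← card_product]
  rw [← card_sigma]
  refine card_le_card_of_injOn (fun s => (s.2.1, s.1.1.1, s.1.1.2, s.1.2.2, s.2.2)) ?_ ?_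
  · rintro ⟨⟨⟨b, x⟩, ⟨x', c⟩⟩, ⟨a, e⟩⟩ hs
    simp only [mem_coe, mem_sigma, mem_product] at hs
    obtain ⟨hmem, ha, he⟩ := hs
    obtain ⟨rfl, hbxc⟩ : x = x' ∧ ({b, x, c} : Finset (Fin n)) ∈ E := hT _ hmem
    simp only [backExt, mem_filter, mem_univ, true_and, mem_swapPairs, Prod.swap_prod_mk] at ha he
    rw [Finset.triple_rev] at he
    simp [tightWalks, ha, he, hbxc]
  · rintro ⟨⟨⟨b, x⟩, ⟨x', c⟩⟩, ⟨a, e⟩⟩ hs ⟨⟨⟨b₁, x₁⟩, ⟨x₁', c₁⟩⟩, ⟨a₁, e₁⟩⟩ hs₁ h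
    simp only [mem_coe, mem_sigma] at hs hs₁
    obtain rfl : x = x' := (hT _ hs.1).1
    obtain rfl : x₁ = x₁' := (hT _ hs₁.1).1
    simp_all

lemma ePQ_goodPairs_mul_le_card_tightWalks {s : ℝ} (hs : 0 ≤ s) :
    (ePQ E (goodPairs E P s) (swapPairs (goodPairs E (swapPairs Q) s)) : ℝ) * (s * s)
      ≤ #(tightWalks E P Q) := by
  unfold ePQ
  rw [← nsmul_eq_mul]
  refine (card_nsmul_le_sum _ (fun pq => (#(backExt E P pq.1.1 pq.1.2) : ℝ) *
    #(backExt E (swapPairs Q) pq.2.2 pq.2.1)) _ fun pq hpq => ?_).trans ?_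
  · simp only [mem_filter, mem_product, mem_goodPairs, mem_swapPairs] at hpq
    exact mul_le_mul hpq.1.1 hpq.1.2 hs (Nat.cast_nonneg _)
  · exact_mod_cast sum_card_backExt_mul_le_card_tightWalks E P Q _
      fun pq hpq => (mem_filter.1 hpq).2

theorem le_card_tightWalks {ρ d ε : ℝ} (hdense : EeDense E ρ d) (hd : 0 < d) (hε : 0 < ε)
    (hρ : ρ ≤ ε / 8) (hρ' : ρ ≤ d * ε ^ 2 / 16)
    (hP : 2 * ε * n ^ 2 ≤ d * #P) (hQ : 2 * ε * n ^ 2 ≤ d * #Q) :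
    d * ε ^ 4 / 16 * n ^ 5 ≤ #(tightWalks E P Q) := by
  set B := goodPairs E P (ε * n)
  set C := goodPairs E (swapPairs Q) (ε * n)
  set M := goodEnds E P (ε * n) ∩ goodEnds E (swapPairs Q) (ε * n)
  have hM : (n : ℝ) / 2 ≤ #M := by
    have hP' := card_compl_goodEnds_le E P hdense hε hρ hP
    have hQ' := card_compl_goodEnds_le E (swapPairs Q) hdense hε hρ (by simpa using hQ)
    have hcompl : (#Mᶜ : ℝ) ≤ #(goodEnds E P (ε * n))ᶜ + #(goodEnds E (swapPairs Q) (ε * n))ᶜ := by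
      rw [compl_inter]; exact_mod_cast card_union_le _ _
    have hsum : (#M : ℝ) + #Mᶜ = n :=
      mod_cast (card_add_card_compl M).trans (Fintype.card_fin n)
    linarith
  have hKmid : ε ^ 2 * n ^ 3 / 8 ≤ #(Kmid B (swapPairs C)) := by
    rw [card_Kmid_swapPairs]
    push_cast
    calc ε ^ 2 * n ^ 3 / 8 = n / 2 * (ε * n / 2 * (ε * n / 2)) := by ring
      _ ≤ #M * (ε * n / 2 * (ε * n / 2)) := by gcongr
      _ ≤ ∑ x ∈ M, (#{b | (b, x) ∈ B} : ℝ) * #{c | (c, x) ∈ C} := by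
        rw [← nsmul_eq_mul]
        refine card_nsmul_le_sum _ _ _ fun x hx => ?_
        simp only [M, goodEnds, mem_inter, mem_filter, mem_univ, true_and] at hx
        exact mul_le_mul hx.1 hx.2 (by positivity) (Nat.cast_nonneg _)
      _ ≤ ∑ x, (#{b | (b, x) ∈ B} : ℝ) * #{c | (c, x) ∈ C} :=
        sum_le_sum_of_subset_of_nonneg (subset_univ _) fun _ _ _ => by positivity
  have hePQ : d * ε ^ 2 * n ^ 3 / 16 ≤ ePQ E B (swapPairs C) := by
    have hdensity := hdense B (swapPairs C)
    have hdKmid := mul_le_mul_of_nonneg_left hKmid hd.le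
    have hρn := mul_le_mul_of_nonneg_right hρ' (by positivity : (0 : ℝ) ≤ n ^ 3)
    linarith
  calc d * ε ^ 4 / 16 * n ^ 5 = d * ε ^ 2 * n ^ 3 / 16 * (ε * n * (ε * n)) := by ring
    _ ≤ ePQ E B (swapPairs C) * (ε * n * (ε * n)) := by gcongr
    _ ≤ #(tightWalks E P Q) :=
      ePQ_goodPairs_mul_le_card_tightWalks E P Q (s := ε * n) (by positivity)

end

theorem statement_18 :
    ∀ d ξ : ℝ, 0 < d → 0 < ξ →
      ∃ ρ c : ℝ, 0 < ρ ∧ 0 < c ∧ ∃ n₀ : ℕ, ∀ n : ℕ, n₀ ≤ n →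
        ∀ E : Finset (Finset (Fin n)), ThreeUniform E → EeDense E ρ d →
          ∀ P P' : Finset (Fin n × Fin n),
            ξ * (n : ℝ) ^ 2 ≤ (P.card : ℝ) → ξ * (n : ℝ) ^ 2 ≤ (P'.card : ℝ) →
            c * (n : ℝ) ^ 5 ≤ (midConnCount E P P' : ℝ) := by
  intro d ξ hd hξ
  set ε := d * ξ / 2 with hε_def
  have hε : 0 < ε := by positivity
  have hlarge {n : ℕ} {P : Finset (Fin n × Fin n)} (hP : ξ * n ^ 2 ≤ #P) :
      2 * ε * n ^ 2 ≤ d * #P :=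
    calc 2 * ε * n ^ 2 = d * (ξ * n ^ 2) := by rw [hε_def]; ring
      _ ≤ d * #P := by gcongr
  refine ⟨min (ε / 8) (d * ε ^ 2 / 16), d * ε ^ 4 / 32, by positivity, by positivity,
    ⌈96 / (d * ε ^ 4)⌉₊, fun n hn E hE hdense P P' hP hP' => ?_⟩
  have hwalks := le_card_tightWalks E P P' hdense hd hε (min_le_left _ _) (min_le_right _ _)
    (hlarge hP) (hlarge hP')
  have hdegenerate : (#(tightWalks E P P') : ℝ) ≤ midConnCount E P P' + 3 * n ^ 4 :=
    mod_cast card_tightWalks_le E P P' hE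
  have hn : 96 ≤ d * ε ^ 4 * n := (div_le_iff₀' (by positivity)).1 (Nat.ceil_le.1 hn)
  nlinarith [pow_nonneg (Nat.cast_nonneg (α := ℝ) n) 4]
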